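/- Let α, β, γ ∈ ℂ with Re(α) > 0, Re(β) > 0, Re(γ) > 0, let a, b ∈ ℂ with Re(a) > 0, Re(b) > 0, let A ∈ ℂ with Re(A) > 0, let m > 0 be real, and let q > 0 with q < Re(α) + 1. Then for every z ∈ ℂ, ∫_0^1 t^{a − 1} (1 − t)^{b − 1} exp(−A/(t^{m}(1 − t)^{m})) · E_{α,β}^{γ,q}(z t^{α}) dt = Σ_{n=0}^∞ [ (γ)_{qn} z^n / (Γ(α n + β) n!) ] · B(a + n α, b; A; m). -/

import Mathlib

/-!
Expanding `E^{γ,q}_{α,β}(z t^α)` as a power series, the factor `t^{nα}` of the `n`-th term turns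
the extended beta integrand with parameter `a` into the one with parameter `a + nα`. Summation and
integration may be interchanged: on `(0, 1)` every such integrand is dominated by the classical
beta integrand `|t^{a-1} (1-t)^{b-1}|` (the exponential factor has modulus at most `1` because
`Re A ≥ 0`), and the coefficients are absolutely summable.

For the summability, `|Γ(γ + qn)| ≤ Γ(Re γ + qn)`, while Euler's limit
`Γ(s) = lim nˢ n! / ∏ (s + j)`, with `|s + j| ≤ (Re s + j) exp((Im s)² / (2 (Re s + j)²))`, gives
`|Γ(s)| ≥ Γ(Re s) exp(-(Im s)² (1 + 1/Re s) / (2 Re s))`; along `s = αn + β` this loses only a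
geometric factor. This reduces everything to the real series `∑ Γ(g + qn) Dⁿ / (Γ(pn + x) n!)`.
Log-convexity of `Γ` bounds its ratio of consecutive terms by `O(n^{q-p-1})`, which tends to `0`
exactly when `q < p + 1`.
-/

open Complex

/-- The generalized Pochhammer symbol `(γ)_x = Γ(γ + x)/Γ(γ)`. -/
noncomputable def pochG (γ x : ℂ) : ℂ := Complex.Gamma (γ + x) / Complex.Gamma γ

/-- The extended beta function `B(x, y; A; m)`. -/
noncomputable def extBetaM (x y A : ℂ) (m : ℝ) : ℂ :=
  ∫ t in (0:ℝ)..1, (t : ℂ) ^ (x - 1) * ((1 - t : ℝ) : ℂ) ^ (y - 1) *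
    Complex.exp (-A / ((t : ℂ) ^ (m : ℂ) * ((1 - t : ℝ) : ℂ) ^ (m : ℂ)))

/-- The Shukla–Prajapati generalized Mittag-Leffler function `E_{α,β}^{γ,q}(z)`. -/
noncomputable def spML (α β γ : ℂ) (q : ℝ) (z : ℂ) : ℂ :=
  ∑' n : ℕ, pochG γ ((q * n : ℝ) : ℂ) * z ^ n /
    (Complex.Gamma (α * n + β) * (n.factorial : ℂ))

open Filter Topology

lemma tendsto_rpow_div_rpow_mul_atTop {p q : ℝ} (hp : 0 < p) (hq : 0 < q) (hqp : q < p + 1)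
    (g x : ℝ) :
    Tendsto (fun t : ℝ => (g + q * (t + 1)) ^ q / ((p * t + x) ^ p * (t + 1))) atTop (𝓝 0) := by
  set c := |g| + 2 * q
  have hbound : ∀ᶠ t : ℝ in atTop, 0 ≤ (g + q * (t + 1)) ^ q / ((p * t + x) ^ p * (t + 1)) ∧
      (g + q * (t + 1)) ^ q / ((p * t + x) ^ p * (t + 1)) ≤
        c ^ q / (p / 2) ^ p * t ^ (-(p + 1 - q)) := by
    filter_upwards [eventually_ge_atTop 1, eventually_ge_atTop (2 * |x| / p),
      eventually_ge_atTop (|g| / q)] with t h1 h2 h3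
    have ht : 0 < t := by linarith
    have hnum : 0 ≤ g + q * (t + 1) := by
      rw [div_le_iff₀ hq] at h3; linarith [neg_abs_le g]
    have hnum' : g + q * (t + 1) ≤ c * t := by nlinarith [le_abs_self g, abs_nonneg g]
    have hden : p / 2 * t ≤ p * t + x := by
      rw [div_le_iff₀ hp] at h2; linarith [neg_abs_le x]
    have hden_pos : 0 < p / 2 * t := by positivity
    refine ⟨div_nonneg (Real.rpow_nonneg hnum _)
      (mul_nonneg (Real.rpow_nonneg (by linarith) _) (by linarith)), ?_⟩
    calc (g + q * (t + 1)) ^ q / ((p * t + x) ^ p * (t + 1))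
        ≤ (c * t) ^ q / ((p / 2 * t) ^ p * t) := by
          gcongr
          · exact Real.rpow_nonneg (by linarith) _
          · linarith
      _ = c ^ q / (p / 2) ^ p * t ^ (-(p + 1 - q)) := by
          rw [Real.mul_rpow (by positivity) ht.le, Real.mul_rpow (by positivity) ht.le,
            Real.rpow_neg ht.le, Real.rpow_sub ht, Real.rpow_add ht, Real.rpow_one]
          field_simp
  refine squeeze_zero' (hbound.mono fun t h => h.1) (hbound.mono fun t h => h.2) ?_
  simpa using
    (tendsto_rpow_neg_atTop (by linarith : 0 < p + 1 - q)).const_mul (c ^ q / (p / 2) ^ p)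

namespace Real

lemma log_Gamma_add_one {y : ℝ} (hy : 0 < y) :
    log (Gamma (y + 1)) = log (Gamma y) + log y := by
  rw [Gamma_add_one hy.ne', log_mul hy.ne' (Gamma_pos_of_pos hy).ne', add_comm]

-- Slopes of the convex function `log ∘ Gamma` increase, and its slope over `[y, y + 1]` is `log y`.
lemma Gamma_add_le_Gamma_mul_rpow {w s : ℝ} (hw : 0 < w) (hs : 0 ≤ s) :
    Gamma (w + s) ≤ Gamma w * (w + s) ^ s := by
  rcases hs.eq_or_lt with rfl | hs
  · simp
  have hws : 0 < w + s := by linarith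
  have slope := convexOn_log_Gamma.slope_mono_adjacent (Set.mem_Ioi.2 hw)
    (Set.mem_Ioi.2 (by linarith : 0 < w + s + 1)) (by linarith : w < w + s) (by linarith)
  simp only [Function.comp_apply, log_Gamma_add_one hws, add_sub_cancel_left, div_one,
    div_le_iff₀ hs] at slope
  rw [← log_le_log_iff (Gamma_pos_of_pos hws) (by positivity),
    log_mul (Gamma_pos_of_pos hw).ne' (by positivity), log_rpow hws]
  linarith

lemma Gamma_mul_rpow_le_Gamma_add {w s : ℝ} (hw : 1 < w) (hs : 0 ≤ s) :
    Gamma w * (w - 1) ^ s ≤ Gamma (w + s) := by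
  rcases hs.eq_or_lt with rfl | hs
  · simp
  have hw1 : 0 < w - 1 := by linarith
  have slope := convexOn_log_Gamma.slope_mono_adjacent (Set.mem_Ioi.2 hw1)
    (Set.mem_Ioi.2 (by linarith : 0 < w + s)) (by linarith : w - 1 < w) (by linarith)
  have hfeq := log_Gamma_add_one hw1
  rw [sub_add_cancel] at hfeq
  simp only [Function.comp_apply, hfeq, sub_sub_cancel, add_sub_cancel_left, div_one,
    le_div_iff₀ hs] at slope
  rw [← log_le_log_iff (by positivity) (Gamma_pos_of_pos (by linarith)),
    log_mul (Gamma_pos_of_pos (by linarith)).ne' (by positivity), log_rpow hw1]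
  linarith

theorem summable_Gamma_mul_pow_div_Gamma_mul_factorial {p q : ℝ} (hp : 0 < p) (hq : 0 < q)
    (hqp : q < p + 1) (g x D : ℝ) :
    Summable fun n : ℕ => Gamma (g + q * n) * D ^ n / (Gamma (p * n + x) * n.factorial) := by
  set f := fun n : ℕ => Gamma (g + q * n) * D ^ n / (Gamma (p * n + x) * n.factorial)
  set r := fun n : ℕ => |D| * ((g + q * (n + 1)) ^ q / ((p * n + (x - 1)) ^ p * (n + 1)))
  have hr : Tendsto r atTop (𝓝 0) := by
    simpa using ((tendsto_rpow_div_rpow_mul_atTop hp hq hqp g (x - 1)).comp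
      tendsto_natCast_atTop_atTop).const_mul |D|
  have hnorm : ∀ k : ℕ, 0 < g + q * k → 0 < p * k + x →
      ‖f k‖ = Gamma (g + q * k) * |D| ^ k / (Gamma (p * k + x) * k.factorial) := by
    intro k h1 h2
    simp only [f, norm_div, norm_mul, norm_pow, Real.norm_eq_abs,
      abs_of_pos (Gamma_pos_of_pos h1), abs_of_pos (Gamma_pos_of_pos h2), Nat.abs_cast]
  have hlarge : ∀ᶠ n : ℕ in atTop, 0 < g + q * n ∧ 1 < p * n + x := by
    have h := tendsto_natCast_atTop_atTop (R := ℝ)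
    filter_upwards [(h.const_mul_atTop hq).eventually_gt_atTop (-g),
      (h.const_mul_atTop hp).eventually_gt_atTop (1 - x)] with n h1 h2
    exact ⟨by linarith, by linarith⟩
  have hratio : ∀ᶠ n : ℕ in atTop, ‖f (n + 1)‖ ≤ r n * ‖f n‖ := by
    filter_upwards [hlarge] with n ⟨hg, hx⟩
    have hup := Gamma_add_le_Gamma_mul_rpow hg hq.le
    have hlow := Gamma_mul_rpow_le_Gamma_add hx hp.le
    calc ‖f (n + 1)‖
        = Gamma (g + q * n + q) * |D| ^ (n + 1) /
            (Gamma (p * n + x + p) * (n + 1).factorial) := by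
          rw [hnorm (n + 1) (by push_cast; nlinarith) (by push_cast; nlinarith)]
          push_cast
          ring_nf
      _ ≤ Gamma (g + q * n) * (g + q * n + q) ^ q * |D| ^ (n + 1) /
            (Gamma (p * n + x) * (p * n + x - 1) ^ p * (n + 1).factorial) := by
          gcongr
      _ = r n * ‖f n‖ := by
          rw [hnorm n hg (by linarith)]
          simp only [r, Nat.factorial_succ]
          push_cast
          field_simp
          ring_nf
  refine summable_of_ratio_norm_eventually_le one_half_lt_one ?_
  filter_upwards [hratio, hr.eventually (eventually_le_nhds one_half_pos)] with n h1 h2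
  exact h1.trans (mul_le_mul_of_nonneg_right h2 (norm_nonneg _))

end Real

section

open Finset

lemma sum_range_inv_add_sq_le {x : ℝ} (hx : 0 < x) (n : ℕ) :
    ∑ j ∈ range n, ((x + j) ^ 2)⁻¹ ≤ (1 + x⁻¹) * x⁻¹ := by
  set f : ℕ → ℝ := fun j => (x + j)⁻¹
  have hterm : ∀ j : ℕ, ((x + j) ^ 2)⁻¹ ≤ (1 + x⁻¹) * (f j - f (j + 1)) := by
    intro j
    have hdiff : (1 + x⁻¹) * (f j - f (j + 1)) - ((x + j) ^ 2)⁻¹ =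
        j / (x * (x + j) ^ 2 * (x + j + 1)) := by
      simp only [f]
      push_cast
      field_simp
      ring
    have : 0 ≤ (j : ℝ) / (x * (x + j) ^ 2 * (x + j + 1)) := by positivity
    linarith
  calc ∑ j ∈ range n, ((x + j) ^ 2)⁻¹ ≤ ∑ j ∈ range n, (1 + x⁻¹) * (f j - f (j + 1)) :=
        sum_le_sum fun j _ => hterm j
    _ = (1 + x⁻¹) * (x⁻¹ - f n) := by rw [← mul_sum, sum_range_sub']; simp [f]
    _ ≤ (1 + x⁻¹) * x⁻¹ := by
        have : 0 ≤ f n := by positivity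
        gcongr
        linarith

namespace Complex

lemma norm_le_re_mul_exp {w : ℂ} (hw : 0 < w.re) :
    ‖w‖ ≤ w.re * Real.exp (w.im ^ 2 / w.re ^ 2 / 2) := by
  rw [← pow_le_pow_iff_left₀ (norm_nonneg w) (by positivity) two_ne_zero, mul_pow,
    ← Real.exp_nat_mul, Complex.sq_norm, normSq_apply]
  have hexp := mul_le_mul_of_nonneg_left (Real.add_one_le_exp (w.im ^ 2 / w.re ^ 2))
    (sq_nonneg w.re)
  have hre : w.re ^ 2 * (w.im ^ 2 / w.re ^ 2) = w.im ^ 2 := by field_simp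
  push_cast
  rw [mul_div_cancel₀ _ two_ne_zero]
  nlinarith

lemma norm_Gamma_le_Gamma_re {s : ℂ} (hs : 0 < s.re) : ‖Gamma s‖ ≤ Real.Gamma s.re := by
  rw [Gamma_eq_integral hs, Real.Gamma_eq_integral hs, GammaIntegral]
  refine (MeasureTheory.norm_integral_le_integral_norm _).trans_eq ?_
  refine MeasureTheory.setIntegral_congr_fun measurableSet_Ioi fun x hx => ?_
  rw [norm_mul, norm_cpow_eq_rpow_re_of_pos hx, norm_real, Real.norm_eq_abs,
    abs_of_pos (Real.exp_pos _), sub_re, one_re]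

lemma prod_norm_add_nat_le {s : ℂ} (hs : 0 < s.re) (n : ℕ) :
    ∏ j ∈ range n, ‖s + j‖ ≤
      (∏ j ∈ range n, (s.re + j)) * Real.exp (s.im ^ 2 * ((1 + s.re⁻¹) * s.re⁻¹) / 2) := by
  calc ∏ j ∈ range n, ‖s + j‖
      ≤ ∏ j ∈ range n, ((s.re + j) * Real.exp (s.im ^ 2 / (s.re + j) ^ 2 / 2)) := by
        refine prod_le_prod (fun j _ => norm_nonneg _) fun j _ => ?_
        simpa using norm_le_re_mul_exp (w := s + j) (by simpa using by positivity)
    _ = (∏ j ∈ range n, (s.re + j)) *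
          Real.exp (s.im ^ 2 * (∑ j ∈ range n, ((s.re + j) ^ 2)⁻¹) / 2) := by
        rw [prod_mul_distrib, ← Real.exp_sum, mul_sum, sum_div]
        simp only [div_eq_mul_inv]
    _ ≤ _ := by
        gcongr
        exact sum_range_inv_add_sq_le hs n

lemma GammaSeq_re_le_exp_mul_norm_GammaSeq {s : ℂ} (hs : 0 < s.re) {n : ℕ} (hn : n ≠ 0) :
    Real.GammaSeq s.re n ≤
      Real.exp (s.im ^ 2 * ((1 + s.re⁻¹) * s.re⁻¹) / 2) * ‖GammaSeq s n‖ := by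
  have hn' : (0 : ℝ) < n := by positivity
  have hprod : 0 < ∏ j ∈ range (n + 1), ‖s + j‖ := prod_pos fun j _ => norm_pos_iff.2 fun h => by
    have := congrArg re h
    simp only [add_re, natCast_re, zero_re] at this
    linarith [j.cast_nonneg (α := ℝ)]
  calc Real.GammaSeq s.re n
      = Real.exp (s.im ^ 2 * ((1 + s.re⁻¹) * s.re⁻¹) / 2) *
          ((n : ℝ) ^ s.re * n.factorial / ((∏ j ∈ range (n + 1), (s.re + j)) *
            Real.exp (s.im ^ 2 * ((1 + s.re⁻¹) * s.re⁻¹) / 2))) := by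
        rw [Real.GammaSeq]
        field_simp
    _ ≤ Real.exp (s.im ^ 2 * ((1 + s.re⁻¹) * s.re⁻¹) / 2) *
          ((n : ℝ) ^ s.re * n.factorial / ∏ j ∈ range (n + 1), ‖s + j‖) := by
        gcongr
        exact prod_norm_add_nat_le hs _
    _ = _ := by
        rw [GammaSeq, norm_div, norm_mul, norm_prod, norm_natCast,
          show ((n : ℂ)) = ((n : ℝ) : ℂ) by push_cast; rfl, norm_cpow_eq_rpow_re_of_pos hn']

lemma Gamma_re_le_exp_mul_norm_Gamma {s : ℂ} (hs : 0 < s.re) :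
    Real.Gamma s.re ≤ Real.exp (s.im ^ 2 * ((1 + s.re⁻¹) * s.re⁻¹) / 2) * ‖Gamma s‖ :=
  le_of_tendsto_of_tendsto (Real.GammaSeq_tendsto_Gamma s.re)
    ((GammaSeq_tendsto_Gamma s).norm.const_mul _)
    (eventually_atTop.2 ⟨1, fun _ hn => GammaSeq_re_le_exp_mul_norm_GammaSeq hs (by omega)⟩)

lemma exists_Gamma_re_le_pow_mul_norm_Gamma {α β : ℂ} (hα : 0 < α.re) (hβ : 0 < β.re) :
    ∃ c : ℝ, 0 < c ∧
      ∀ n : ℕ, Real.Gamma (α.re * n + β.re) ≤ c ^ (n + 1) * ‖Complex.Gamma (α * n + β)‖ := by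
  set μ := min α.re β.re
  set L := |α.im| + |β.im|
  have hμ : 0 < μ := lt_min hα hβ
  set K := L ^ 2 * ((1 + μ⁻¹) * μ⁻¹) / 2 with hK
  refine ⟨Real.exp K, Real.exp_pos K, fun n => ?_⟩
  set s := α * n + β
  have hn : (0 : ℝ) ≤ n := n.cast_nonneg
  have hre : s.re = α.re * n + β.re := by simp [s]
  have hre_ge : μ * (n + 1) ≤ s.re := by
    rw [hre]; nlinarith [min_le_left α.re β.re, min_le_right α.re β.re]
  have hre_pos : 0 < s.re := by nlinarith
  have him_sq : s.im ^ 2 ≤ (L * (n + 1)) ^ 2 := by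
    have him : |s.im| ≤ L * (n + 1) := by
      have : s.im = α.im * n + β.im := by simp [s]
      rw [this]
      calc |α.im * n + β.im| ≤ |α.im| * n + |β.im| := by
            simpa [abs_mul, abs_of_nonneg hn] using abs_add_le (α.im * n) β.im
        _ ≤ L * (n + 1) := by nlinarith [abs_nonneg α.im, abs_nonneg β.im]
    simpa only [sq_abs] using pow_le_pow_left₀ (abs_nonneg _) him 2
  have hexp : s.im ^ 2 * ((1 + s.re⁻¹) * s.re⁻¹) / 2 ≤ (n + 1) * K := by
    calc s.im ^ 2 * ((1 + s.re⁻¹) * s.re⁻¹) / 2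
        ≤ (L * (n + 1)) ^ 2 * ((1 + μ⁻¹) * (μ * (n + 1))⁻¹) / 2 := by
          gcongr
          nlinarith
      _ = (n + 1) * K := by rw [hK]; field_simp
  rw [← Real.exp_nat_mul, ← hre]
  push_cast
  calc Real.Gamma s.re
      ≤ Real.exp (s.im ^ 2 * ((1 + s.re⁻¹) * s.re⁻¹) / 2) * ‖Complex.Gamma s‖ :=
        Gamma_re_le_exp_mul_norm_Gamma hre_pos
    _ ≤ Real.exp ((n + 1) * K) * ‖Complex.Gamma s‖ := by gcongr

end Complex
end

noncomputable def spMLTerm (α β γ : ℂ) (q : ℝ) (z : ℂ) (n : ℕ) : ℂ :=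
  pochG γ ((q * n : ℝ) : ℂ) * z ^ n / (Complex.Gamma (α * n + β) * (n.factorial : ℂ))

lemma spML_eq_tsum (α β γ : ℂ) (q : ℝ) (z : ℂ) :
    spML α β γ q z = ∑' n, spMLTerm α β γ q z n := rfl

lemma spMLTerm_mul_pow (α β γ : ℂ) (q : ℝ) (z w : ℂ) (n : ℕ) :
    spMLTerm α β γ q (z * w) n = spMLTerm α β γ q z n * w ^ n := by
  simp only [spMLTerm, mul_pow]
  ring

theorem summable_norm_spMLTerm {α β γ : ℂ} (hα : 0 < α.re) (hβ : 0 < β.re) (hγ : 0 < γ.re)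
    {q : ℝ} (hq : 0 < q) (hqα : q < α.re + 1) (z : ℂ) :
    Summable fun n => ‖spMLTerm α β γ q z n‖ := by
  obtain ⟨c, hc, hΓ⟩ := Complex.exists_Gamma_re_le_pow_mul_norm_Gamma hα hβ
  have hΓγ : 0 < ‖Complex.Gamma γ‖ := norm_pos_iff.2 (Complex.Gamma_ne_zero_of_re_pos hγ)
  refine .of_nonneg_of_le (fun n => norm_nonneg _) (fun n => ?_)
    ((Real.summable_Gamma_mul_pow_div_Gamma_mul_factorial hα hq hqα γ.re β.re (c * ‖z‖)).mul_left
      (c / ‖Complex.Gamma γ‖))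
  have hs : 0 < Real.Gamma (α.re * n + β.re) := Real.Gamma_pos_of_pos (by positivity)
  have hnum : ‖Complex.Gamma (γ + ((q * n : ℝ) : ℂ))‖ ≤ Real.Gamma (γ.re + q * n) := by
    simpa using Complex.norm_Gamma_le_Gamma_re (s := γ + ((q * n : ℝ) : ℂ))
      (by simp; positivity)
  have hden : Real.Gamma (α.re * n + β.re) / c ^ (n + 1) ≤ ‖Complex.Gamma (α * n + β)‖ :=
    (div_le_iff₀' (by positivity)).2 (hΓ n)
  calc ‖spMLTerm α β γ q z n‖
      = ‖Complex.Gamma (γ + ((q * n : ℝ) : ℂ))‖ * ‖z‖ ^ n /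
          (‖Complex.Gamma γ‖ * ‖Complex.Gamma (α * n + β)‖ * n.factorial) := by
        simp only [spMLTerm, pochG, norm_div, norm_mul, norm_pow, Complex.norm_natCast]
        ring
    _ ≤ Real.Gamma (γ.re + q * n) * ‖z‖ ^ n /
          (‖Complex.Gamma γ‖ * (Real.Gamma (α.re * n + β.re) / c ^ (n + 1)) * n.factorial) := by
        gcongr
    _ = c / ‖Complex.Gamma γ‖ * (Real.Gamma (γ.re + q * n) * (c * ‖z‖) ^ n /
          (Real.Gamma (α.re * n + β.re) * n.factorial)) := by
        field_simp
        ring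

open MeasureTheory

theorem integral_tsum_mul_of_norm_le {X ι 𝕜 : Type*} [MeasurableSpace X] {μ : Measure X}
    [Countable ι] [RCLike 𝕜] {c : ι → 𝕜} {f : ι → X → 𝕜} {g : X → ℝ}
    (hc : Summable fun i => ‖c i‖) (hf : ∀ i, AEStronglyMeasurable (f i) μ)
    (hg : Integrable g μ) (hfg : ∀ i, ∀ᵐ x ∂μ, ‖f i x‖ ≤ g x) :
    ∫ x, ∑' i, c i * f i x ∂μ = ∑' i, c i * ∫ x, f i x ∂μ := by
  have hint : ∀ i, Integrable (f i) μ := fun i => hg.mono' (hf i) (hfg i)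
  have hbound : ∀ i, ∫ x, ‖c i * f i x‖ ∂μ ≤ ‖c i‖ * ∫ x, g x ∂μ := fun i => by
    simp only [norm_mul, integral_const_mul]
    exact mul_le_mul_of_nonneg_left (integral_mono_ae (hint i).norm hg (hfg i)) (norm_nonneg _)
  rw [← integral_tsum_of_summable_integral_norm (fun i => (hint i).const_mul (c i))
    (.of_nonneg_of_le (fun i => integral_nonneg fun _ => norm_nonneg _) hbound
      (hc.mul_right _))]
  simp_rw [integral_const_mul]

noncomputable def extBetaIntegrand (x y A : ℂ) (m : ℝ) (t : ℝ) : ℂ :=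
  (t : ℂ) ^ (x - 1) * ((1 - t : ℝ) : ℂ) ^ (y - 1) *
    Complex.exp (-A / ((t : ℂ) ^ (m : ℂ) * ((1 - t : ℝ) : ℂ) ^ (m : ℂ)))

lemma extBetaM_eq_integral_Ioo (x y A : ℂ) (m : ℝ) :
    extBetaM x y A m = ∫ t in Set.Ioo 0 1, extBetaIntegrand x y A m t := by
  rw [extBetaM, intervalIntegral.integral_of_le zero_le_one, integral_Ioc_eq_integral_Ioo]
  rfl

lemma measurable_extBetaIntegrand (x y A : ℂ) (m : ℝ) :
    Measurable (extBetaIntegrand x y A m) := by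
  unfold extBetaIntegrand
  fun_prop

lemma extBetaIntegrand_add_nat_mul {t : ℝ} (ht : 0 < t) (x y A α : ℂ) (m : ℝ) (n : ℕ) :
    extBetaIntegrand (x + n * α) y A m t = ((t : ℂ) ^ α) ^ n * extBetaIntegrand x y A m t := by
  have ht' : (t : ℂ) ≠ 0 := by exact_mod_cast ht.ne'
  rw [extBetaIntegrand, extBetaIntegrand, ← cpow_nat_mul,
    show x + n * α - 1 = x - 1 + n * α by ring, cpow_add _ _ ht']
  ring

lemma norm_extBetaIntegrand_le {x y A a : ℂ} {m : ℝ} (ha : a.re ≤ x.re) (hA : 0 ≤ A.re)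
    {t : ℝ} (ht : t ∈ Set.Ioo 0 1) :
    ‖extBetaIntegrand x y A m t‖ ≤ ‖(t : ℂ) ^ (a - 1) * (1 - (t : ℂ)) ^ (y - 1)‖ := by
  obtain ⟨ht0, ht1⟩ := ht
  have ht1' : 0 < 1 - t := by linarith
  have hexp : ‖Complex.exp (-A / ((t : ℂ) ^ (m : ℂ) * ((1 - t : ℝ) : ℂ) ^ (m : ℂ)))‖ ≤ 1 := by
    rw [← ofReal_cpow ht0.le, ← ofReal_cpow ht1'.le, ← ofReal_mul, norm_exp, div_ofReal_re,
      Real.exp_le_one_iff, neg_re]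
    exact div_nonpos_of_nonpos_of_nonneg (by linarith) (by positivity)
  rw [extBetaIntegrand, norm_mul, norm_mul, norm_mul, show 1 - (t : ℂ) = ((1 - t : ℝ) : ℂ) by simp,
    norm_cpow_eq_rpow_re_of_pos ht0, norm_cpow_eq_rpow_re_of_pos ht0]
  have hpow : t ^ (x - 1).re ≤ t ^ (a - 1).re :=
    Real.rpow_le_rpow_of_exponent_ge ht0 ht1.le (by simpa using ha)
  simpa using mul_le_mul (mul_le_mul_of_nonneg_right hpow (norm_nonneg _)) hexp (norm_nonneg _)
    (by positivity)

lemma extBetaIntegrand_mul_spML {t : ℝ} (ht : 0 < t) (a b A : ℂ) (m : ℝ) (α β γ : ℂ) (q : ℝ)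
    (z : ℂ) :
    extBetaIntegrand a b A m t * spML α β γ q (z * (t : ℂ) ^ α) =
      ∑' n : ℕ, spMLTerm α β γ q z n * extBetaIntegrand (a + n * α) b A m t := by
  rw [spML_eq_tsum, ← tsum_mul_left]
  refine tsum_congr fun n => ?_
  rw [spMLTerm_mul_pow, extBetaIntegrand_add_nat_mul ht]
  ring

theorem euler_integral_spML_general
    (α β γ : ℂ) (hα : 0 < α.re) (hβ : 0 < β.re) (hγ : 0 < γ.re)
    (a b : ℂ) (ha : 0 < a.re) (hb : 0 < b.re)
    (A : ℂ) (hA : 0 < A.re) (m : ℝ)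
    (q : ℝ) (hq : 0 < q) (hqα : q < α.re + 1) (z : ℂ) :
    (∫ t in (0:ℝ)..1, (t : ℂ) ^ (a - 1) * ((1 - t : ℝ) : ℂ) ^ (b - 1) *
        Complex.exp (-A / ((t : ℂ) ^ (m : ℂ) * ((1 - t : ℝ) : ℂ) ^ (m : ℂ))) *
        spML α β γ q (z * (t : ℂ) ^ α)) =
      ∑' n : ℕ, pochG γ ((q * n : ℝ) : ℂ) * z ^ n /
          (Complex.Gamma (α * n + β) * (n.factorial : ℂ)) *
        extBetaM (a + n * α) b A m := by
  have hdom : Integrable (fun t : ℝ => ‖(t : ℂ) ^ (a - 1) * (1 - (t : ℂ)) ^ (b - 1)‖)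
      (volume.restrict (Set.Ioo 0 1)) :=
    ((intervalIntegrable_iff_integrableOn_Ioo_of_le zero_le_one).1
      (Complex.betaIntegral_convergent ha hb)).norm
  calc _ = ∫ t in Set.Ioo (0 : ℝ) 1,
          extBetaIntegrand a b A m t * spML α β γ q (z * (t : ℂ) ^ α) := by
        rw [intervalIntegral.integral_of_le zero_le_one, integral_Ioc_eq_integral_Ioo]
        rfl
    _ = ∫ t in Set.Ioo (0 : ℝ) 1,
          ∑' n : ℕ, spMLTerm α β γ q z n * extBetaIntegrand (a + n * α) b A m t :=
        setIntegral_congr_fun measurableSet_Ioo fun t ht =>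
          extBetaIntegrand_mul_spML ht.1 a b A m α β γ q z
    _ = ∑' n : ℕ, spMLTerm α β γ q z n *
          ∫ t in Set.Ioo (0 : ℝ) 1, extBetaIntegrand (a + n * α) b A m t :=
        integral_tsum_mul_of_norm_le (summable_norm_spMLTerm hα hβ hγ hq hqα z)
          (fun n => (measurable_extBetaIntegrand _ _ _ _).aestronglyMeasurable) hdom
          fun n => ae_restrict_of_forall_mem measurableSet_Ioo fun t ht =>
            norm_extBetaIntegrand_le (by simp; positivity) hA.le ht
    _ = _ := by simp_rw [extBetaM_eq_integral_Ioo]; rfl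

/-- Euler type integral of the Shukla–Prajapati generalized Mittag-Leffler function. -/
theorem euler_integral_spML
    (α β γ : ℂ) (hα : 0 < α.re) (hβ : 0 < β.re) (hγ : 0 < γ.re)
    (a b : ℂ) (ha : 0 < a.re) (hb : 0 < b.re)
    (A : ℂ) (hA : 0 < A.re) (m : ℝ) (hm : 0 < m)
    (q : ℝ) (hq : 0 < q) (hqα : q < α.re + 1) (z : ℂ) :
    (∫ t in (0:ℝ)..1, (t : ℂ) ^ (a - 1) * ((1 - t : ℝ) : ℂ) ^ (b - 1) *
        Complex.exp (-A / ((t : ℂ) ^ (m : ℂ) * ((1 - t : ℝ) : ℂ) ^ (m : ℂ))) *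
        spML α β γ q (z * (t : ℂ) ^ α)) =
      ∑' n : ℕ, pochG γ ((q * n : ℝ) : ℂ) * z ^ n /
          (Complex.Gamma (α * n + β) * (n.factorial : ℂ)) *
        extBetaM (a + n * α) b A m :=
  euler_integral_spML_general α β γ hα hβ hγ a b ha hb A hA m q hq hqα z
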